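/- (Lemma 4.4) In the q-boson algebra, with Y = b_- + k, for every m ≥ 0: (b_+;q)_m b_-^m = (-1)^m q^{m(m-1)/2} Σ_{s=0}^m μ^{m-s} binom_q(m,s) (μ;q)_s (μ^{-1}q^{1-m}Y;q)_{m-s}, where (X;q)_r = ∏_{j=0}^{r-1}(1 - X q^j) with operator argument X. -/

import Mathlib

open scoped BigOperators

noncomputable section

/-- The q-Pochhammer symbol `(z;q)_m = ∏_{j=0}^{m-1} (1 - z q^j)`. -/
def qP (q z : ℝ) (m : ℕ) : ℝ := ∏ j ∈ Finset.range m, (1 - z * q ^ j)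

/-- The Fock space `F = ⊕_{m≥0} ℂ|m⟩`, realized as coefficient sequences:
`v : ℕ → ℝ` stands for the vector `∑_m v m · |m⟩`. -/
abbrev Fock : Type := ℕ → ℝ

/-- The creation operator `b₊`, with `b₊|m⟩ = |m+1⟩`. -/
def Bp : Module.End ℝ Fock where
  toFun v := fun i => if i = 0 then 0 else v (i - 1)
  map_add' x y := by funext i; by_cases h : i = 0 <;> simp [h]
  map_smul' c x := by funext i; by_cases h : i = 0 <;> simp [h]

/-- The annihilation operator `b₋`, with `b₋|m⟩ = (1-q^m)|m-1⟩`. -/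
def Bm (q : ℝ) : Module.End ℝ Fock where
  toFun v := fun i => (1 - q ^ (i + 1)) * v (i + 1)
  map_add' x y := by funext i; simp [mul_add]
  map_smul' c x := by funext i; simp; ring

/-- The operator `k`, with `k|m⟩ = q^m|m⟩`. -/
def Kop (q : ℝ) : Module.End ℝ Fock where
  toFun v := fun i => q ^ i * v i
  map_add' x y := by funext i; simp [mul_add]
  map_smul' c x := by funext i; simp; ring

/-- The basis vector `|m⟩`. -/
def fock (m : ℕ) : Fock := fun i => if i = m then 1 else 0

/-- The trace `Tr(X) = ∑_{m≥0} ⟨m|X|m⟩/(q;q)_m`, with pairing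
`⟨m|m'⟩ = δ_{m,m'}(q;q)_m`; equivalently the sum of diagonal coefficients. -/
def Tr (X : Module.End ℝ Fock) : ℝ := ∑' m : ℕ, X (fock m) m

/-- The q-binomial coefficient. -/
def qBinom (q : ℝ) (m k : ℕ) : ℝ :=
  if k ≤ m then qP q q m / (qP q q k * qP q q (m - k)) else 0

/-- Operator q-Pochhammer `(X;q)_r = ∏_{j=0}^{r-1}(1 - q^j X)`
(the factors commute). -/
def opPoch (q : ℝ) (X : Module.End ℝ Fock) : ℕ → Module.End ℝ Fock
  | 0 => 1
  | r + 1 => opPoch q X r * (1 - (q ^ r) • X)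

/-! Since `b₊ b₋ = 1 - k` and `b₋^r k = q^r k b₋^r`, the factor `1 - q^r b₊` moved past
`b₋^(r+1)` becomes `b₋^r (Y - q^r)`, so the left side is the polynomial `∏_{j<m} (Y - q^j)` in
`Y`. That polynomial is `(-1)^m q^(m(m-1)/2) (q^(1-m) Y; q)_m`, and the q-Chu–Vandermonde identity
`(a b x; q)_m = ∑_s a^(m-s) [m, s]_q (a; q)_s (b x; q)_(m-s)` with `a = μ`, `b = μ⁻¹ q^(1-m)`
expands it into the right side. -/

open Polynomial Finset

section QBinom

variable {q : ℝ}

lemma qP_zero (q z : ℝ) : qP q z 0 = 1 := prod_range_zero _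

lemma qP_succ (q z : ℝ) (k : ℕ) : qP q z (k + 1) = qP q z k * (1 - z * q ^ k) :=
  prod_range_succ _ _

lemma qP_self_pos (hq0 : 0 < q) (hq1 : q < 1) (k : ℕ) : 0 < qP q q k :=
  prod_pos fun j _ => by
    have : q * q ^ j < 1 := by
      calc q * q ^ j ≤ q := mul_le_of_le_one_right hq0.le (pow_le_one₀ hq0.le hq1.le)
        _ < 1 := hq1
    linarith

lemma one_sub_mul_pow_ne_zero (hq0 : 0 < q) (hq1 : q < 1) (k : ℕ) : 1 - q * q ^ k ≠ 0 := by
  have h := (qP_self_pos hq0 hq1 (k + 1)).ne'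
  rw [qP_succ] at h
  exact right_ne_zero_of_mul h

lemma qBinom_zero_right (hq0 : 0 < q) (hq1 : q < 1) (m : ℕ) : qBinom q m 0 = 1 := by
  simp [qBinom, qP_zero, (qP_self_pos hq0 hq1 m).ne']

lemma qBinom_self (hq0 : 0 < q) (hq1 : q < 1) (m : ℕ) : qBinom q m m = 1 := by
  simp [qBinom, qP_zero, (qP_self_pos hq0 hq1 m).ne']

lemma qBinom_of_lt (q : ℝ) {m k : ℕ} (h : m < k) : qBinom q m k = 0 := by
  simp [qBinom, Nat.not_le.mpr h]

lemma qBinom_succ_succ (hq0 : 0 < q) (hq1 : q < 1) (m s : ℕ) :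
    qBinom q (m + 1) (s + 1) = q ^ (s + 1) * qBinom q m (s + 1) + qBinom q m s := by
  rcases lt_trichotomy m s with h | rfl | h
  · simp [qBinom_of_lt q h, qBinom_of_lt q (by omega : m + 1 < s + 1),
      qBinom_of_lt q (by omega : m < s + 1)]
  · simp [qBinom_self hq0 hq1, qBinom_of_lt q (Nat.lt_succ_self m)]
  obtain ⟨d, rfl⟩ : ∃ d, m = s + 1 + d := ⟨m - (s + 1), by omega⟩
  simp only [qBinom, if_pos (by omega : s + 1 ≤ s + 1 + d + 1),
    if_pos (by omega : s + 1 ≤ s + 1 + d), if_pos (by omega : s ≤ s + 1 + d),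
    show s + 1 + d + 1 - (s + 1) = d + 1 by omega, show s + 1 + d - (s + 1) = d by omega,
    show s + 1 + d - s = d + 1 by omega, qP_succ q q]
  have := qP_self_pos hq0 hq1 s
  have := qP_self_pos hq0 hq1 d
  have := qP_self_pos hq0 hq1 (s + 1 + d)
  have := one_sub_mul_pow_ne_zero hq0 hq1 s
  have := one_sub_mul_pow_ne_zero hq0 hq1 d
  field_simp
  ring

end QBinom

def qPochPoly (q c : ℝ) (r : ℕ) : ℝ[X] := ∏ j ∈ range r, (1 - C (c * q ^ j) * X)

lemma qPochPoly_succ (q c : ℝ) (r : ℕ) :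
    qPochPoly q c (r + 1) = qPochPoly q c r * (1 - C (c * q ^ r) * X) :=
  prod_range_succ _ _

lemma sum_range_succ_eq_sum_add_of_pascal {M : Type*} [AddCommMonoid M] (f A B : ℕ → M) (m : ℕ)
    (h₀ : f 0 = A 0) (hsucc : ∀ t, f (t + 1) = A (t + 1) + B t) (hA : A (m + 1) = 0) :
    ∑ s ∈ range (m + 2), f s = ∑ s ∈ range (m + 1), (A s + B s) := by
  have hA' : ∑ s ∈ range (m + 2), A s = ∑ s ∈ range (m + 1), A s := by
    rw [sum_range_succ, hA, add_zero]
  rw [sum_add_distrib, ← hA', sum_range_succ' f, sum_range_succ' A]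
  simp only [hsucc, sum_add_distrib, h₀]
  abel

/-- The q-Chu–Vandermonde identity. -/
theorem sum_qBinom_mul_qPochPoly {q : ℝ} (hq0 : 0 < q) (hq1 : q < 1) (a b : ℝ) (m : ℕ) :
    ∑ s ∈ range (m + 1), C (a ^ (m - s) * qBinom q m s * qP q a s) * qPochPoly q b (m - s)
      = qPochPoly q (a * b) m := by
  induction m with
  | zero => simp [qPochPoly, qP_zero, qBinom_zero_right hq0 hq1]
  | succ m ih =>
    -- the two halves of q-Pascal recombine termwise through
    -- `a q^s (1 - b q^(m-s) X) + (1 - a q^s) = 1 - a b q^m X`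
    let A : ℕ → ℝ[X] := fun s =>
      C (a ^ (m + 1 - s) * q ^ s * qBinom q m s * qP q a s) * qPochPoly q b (m + 1 - s)
    let B : ℕ → ℝ[X] := fun s =>
      C (a ^ (m - s) * qBinom q m s * qP q a (s + 1)) * qPochPoly q b (m - s)
    have hAB : ∀ s ∈ range (m + 1), A s + B s
        = C (a ^ (m - s) * qBinom q m s * qP q a s) * qPochPoly q b (m - s)
          * (1 - C (a * b * q ^ m) * X) := by
      intro s hs
      obtain ⟨d, rfl⟩ : ∃ d, m = s + d := ⟨m - s, by have := mem_range.mp hs; omega⟩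
      simp only [A, B, show s + d + 1 - s = d + 1 by omega, show s + d - s = d by omega,
        qPochPoly_succ, qP_succ, pow_add, map_mul, map_sub, map_pow, map_one]
      ring
    rw [sum_range_succ_eq_sum_add_of_pascal _ A B m, sum_congr rfl hAB, ← sum_mul, ih,
      qPochPoly_succ]
    · simp [A, qBinom_zero_right hq0 hq1]
    · intro t
      simp only [A, B, qBinom_succ_succ hq0 hq1, show m + 1 - (t + 1) = m - t by omega]
      simp only [map_mul, map_add]
      ring
    · simp [A, qBinom_of_lt q (Nat.lt_succ_self m)]

lemma C_mul_qPochPoly_eq_prod_X_sub_C {q : ℝ} (hq0 : 0 < q) (m : ℕ) :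
    C ((-1 : ℝ) ^ m * q ^ (m * (m - 1) / 2)) * qPochPoly q (q ^ (1 - (m : ℤ))) m
      = ∏ j ∈ range m, (X - C (q ^ j)) := by
  have hscalar : (-1 : ℝ) ^ m * q ^ (m * (m - 1) / 2) = ∏ j ∈ range m, -q ^ (m - 1 - j) := by
    rw [prod_range_reflect (fun j => -q ^ j) m, prod_neg, prod_pow_eq_pow_sum, sum_range_id,
      card_range]
  rw [hscalar, map_prod, qPochPoly, ← prod_mul_distrib,
    ← prod_range_reflect (fun j => X - C (q ^ j)) m]
  refine prod_congr rfl fun j hj => ?_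
  -- the `j`-th factor `-q^(m-1-j) (1 - q^(1-m+j) X)` is `X - q^(m-1-j)`
  have hone : q ^ (m - 1 - j) * (q ^ (1 - (m : ℤ)) * q ^ j) = 1 := by
    rw [← zpow_natCast q (m - 1 - j), ← zpow_natCast q j, ← zpow_add₀ hq0.ne',
      ← zpow_add₀ hq0.ne', show ((m - 1 - j : ℕ) : ℤ) + (1 - m + j) = 0 by
        have := mem_range.mp hj; omega, zpow_zero]
  calc C (-q ^ (m - 1 - j)) * (1 - C (q ^ (1 - (m : ℤ)) * q ^ j) * X)
      = C (q ^ (m - 1 - j) * (q ^ (1 - (m : ℤ)) * q ^ j)) * X - C (q ^ (m - 1 - j)) := by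
        simp only [map_mul, map_neg]; ring
    _ = X - C (q ^ (m - 1 - j)) := by rw [hone, map_one, one_mul]

lemma bp_mul_bm (q : ℝ) : Bp * Bm q = 1 - Kop q := by
  ext v i
  cases i with
  | zero => simp [Module.End.mul_apply, Bp, Bm, Kop]
  | succ n => simp [Module.End.mul_apply, Bp, Bm, Kop]; ring

lemma bm_mul_kop (q : ℝ) : Bm q * Kop q = q • (Kop q * Bm q) := by
  ext v i
  simp [Module.End.mul_apply, Bm, Kop]
  ring

lemma bm_pow_mul_kop (q : ℝ) (r : ℕ) : Bm q ^ r * Kop q = q ^ r • (Kop q * Bm q ^ r) := by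
  induction r with
  | zero => simp
  | succ r ih =>
    rw [pow_succ', mul_assoc, ih, mul_smul_comm, ← mul_assoc, bm_mul_kop, smul_mul_assoc,
      smul_smul, mul_assoc, ← pow_succ', ← pow_succ]

lemma one_sub_smul_bp_mul_bm_pow_succ (q : ℝ) (r : ℕ) :
    (1 - q ^ r • Bp) * Bm q ^ (r + 1) = Bm q ^ r * (Bm q + Kop q - q ^ r • 1) := by
  rw [sub_mul, one_mul, smul_mul_assoc, pow_succ' (Bm q) r, ← mul_assoc, bp_mul_bm, sub_mul,
    one_mul, mul_sub, mul_add, bm_pow_mul_kop, mul_smul_comm, mul_one, ← pow_succ, smul_sub, ← pow_succ']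
  abel

lemma opPoch_bp_mul_bm_pow (q : ℝ) (m : ℕ) :
    opPoch q Bp m * Bm q ^ m = aeval (Bm q + Kop q) (∏ j ∈ range m, (X - C (q ^ j))) := by
  induction m with
  | zero => simp [opPoch]
  | succ r ih =>
    rw [opPoch, mul_assoc, one_sub_smul_bp_mul_bm_pow_succ, ← mul_assoc, ih, prod_range_succ,
      map_mul, map_sub, aeval_X, aeval_C, Algebra.algebraMap_eq_smul_one]

lemma aeval_qPochPoly (q c : ℝ) (Y : Module.End ℝ Fock) (r : ℕ) :
    aeval Y (qPochPoly q c r) = opPoch q (c • Y) r := by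
  induction r with
  | zero => simp [qPochPoly, opPoch]
  | succ r ih =>
    rw [qPochPoly_succ, map_mul, ih, opPoch, map_sub, map_one, map_mul, aeval_C, aeval_X,
      ← Algebra.smul_def, smul_smul, mul_comm c]

/-- Lemma 4.4: with `Y = b₋ + k`, for every `m ≥ 0`,
`(b₊;q)_m b₋^m = (-1)^m q^{m(m-1)/2}
  ∑_{s=0}^m μ^{m-s} binom_q(m,s) (μ;q)_s (μ^{-1}q^{1-m}Y;q)_{m-s}`. -/
theorem lemma_hrk (q μ : ℝ) (hq0 : 0 < q) (hq1 : q < 1) (hμ : μ ≠ 0)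
    (m : ℕ) :
    opPoch q Bp m * (Bm q) ^ m
      = ((-1 : ℝ) ^ m * q ^ (m * (m - 1) / 2)) •
          ∑ s ∈ Finset.range (m + 1),
            (μ ^ (m - s) * qBinom q m s * qP q μ s) •
              opPoch q ((μ⁻¹ * q ^ (1 - (m : ℤ))) • (Bm q + Kop q)) (m - s) := by
  have hμb : μ * (μ⁻¹ * q ^ (1 - (m : ℤ))) = q ^ (1 - (m : ℤ)) := by field_simp
  have hvdm := sum_qBinom_mul_qPochPoly hq0 hq1 μ (μ⁻¹ * q ^ (1 - (m : ℤ))) m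
  rw [hμb] at hvdm
  rw [opPoch_bp_mul_bm_pow, ← C_mul_qPochPoly_eq_prod_X_sub_C hq0, ← hvdm, map_mul, aeval_C,
    ← Algebra.smul_def, map_sum]
  refine congrArg _ (sum_congr rfl fun s _ => ?_)
  rw [map_mul, aeval_C, ← Algebra.smul_def, aeval_qPochPoly]
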